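/- arXiv:2407.18410 — 5 statements merged into one kernel-verified Lean document; each statement's English description precedes it below -/
import Mathlib

section
/- Let 𝕜 be a field, ι and κ index types, and let A, Ȧ : ι → κ → 𝕜, B, Ḃ : κ → 𝕜 and X : ι → 𝕜 satisfy: B ≠ 0; A c a = X c * B a for all c, a (i.e. A = X ⊗ B); and the linearized wedge relation Ȧ c a * B b − Ȧ c b * B a + A c a * Ḃ b − A c b * Ḃ a = 0 for all c ∈ ι and a, b ∈ κ. Then there exists Ẋ : ι → 𝕜 such that Ȧ c a − X c * Ḃ a = Ẋ c * B a for all c ∈ ι and a ∈ κ. -/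
/-- Key algebraic step in the extended Stewart–Walker lemma: linearizing
`A ∧ B = 0` around a background where `A = X ⊗ B` and `B ≠ 0` yields
`Ȧ − X ⊗ Ḃ = Ẋ ⊗ B` for some `Ẋ`. -/
theorem linearized_wedge_factor {𝕜 : Type*} [Field 𝕜] {ι κ : Type*}
    (A Adot : ι → κ → 𝕜) (B Bdot : κ → 𝕜) (X : ι → 𝕜)
    (hB : B ≠ 0)
    (hA : ∀ (c : ι) (a : κ), A c a = X c * B a)
    (hlin : ∀ (c : ι) (a b : κ),
      Adot c a * B b - Adot c b * B a + A c a * Bdot b - A c b * Bdot a = 0) :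
    ∃ Xdot : ι → 𝕜, ∀ (c : ι) (a : κ),
      Adot c a - X c * Bdot a = Xdot c * B a := by
  obtain ⟨b₀, hb₀⟩ : ∃ b₀, B b₀ ≠ 0 := by
    by_contra h
    push_neg at h
    exact hB (funext fun b => h b)
  refine ⟨fun c => (Adot c b₀ - X c * Bdot b₀) / B b₀, fun c a => ?_⟩
  have h := hlin c a b₀
  rw [hA, hA] at h
  field_simp
  linear_combination h
end

section
/- Let U ⊆ ℂ be a nonempty open connected set and let g : ℂ → ℂ be holomorphic on U with g(z) ≠ 0 and g'(z) ≠ 0 for all z ∈ U. If g(z) · g''(z) = (3/2) · (g'(z))² for all z ∈ U, then there exist constants A ∈ ℂ with A ≠ 0 and h ∈ ℂ such that g(z) · (z − h)² = A for all z ∈ U. -/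
open Metric in
lemma const_of_deriv_zero_aux {U : Set ℂ} (hUo : IsOpen U) (hUc : IsPreconnected U)
    {f : ℂ → ℂ} (hf : DifferentiableOn ℂ f U) (h' : ∀ z ∈ U, deriv f z = 0)
    {z0 : ℂ} (hz0 : z0 ∈ U) : ∀ z ∈ U, f z = f z0 := by
  have hfa : AnalyticOnNhd ℂ f U := hf.analyticOnNhd hUo
  have hca : AnalyticOnNhd ℂ (fun _ => f z0) U := analyticOnNhd_const
  have hev : f =ᶠ[nhds z0] fun _ => f z0 := by
    obtain ⟨ε, εpos, hball⟩ := Metric.isOpen_iff.mp hUo z0 hz0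
    filter_upwards [Metric.ball_mem_nhds z0 εpos] with z hz
    refine (convex_ball z0 ε).is_const_of_fderivWithin_eq_zero (hf.mono hball)
      (fun w hw => ?_) hz (Metric.mem_ball_self εpos)
    have hdw : DifferentiableAt ℂ f w :=
      hf.differentiableAt (hUo.mem_nhds (hball hw))
    rw [fderivWithin_of_isOpen Metric.isOpen_ball hw]
    refine ContinuousLinearMap.ext_ring ?_
    rw [fderiv_apply_one_eq_deriv, h' w (hball hw)]
    simp
  exact fun z hz => hfa.eqOn_of_preconnected_of_eventuallyEq hca hUc hz0 hev hz

/-- Solutions of `g g'' = (3/2) g'²` on a nonempty open connected set,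
with `g` and `g'` nonvanishing, are of the form `g(z) = A/(z − h)²`. -/
theorem ode_Ic_half {U : Set ℂ} (hUo : IsOpen U) (hUc : IsConnected U)
    (g : ℂ → ℂ) (hg : DifferentiableOn ℂ g U)
    (hg0 : ∀ z ∈ U, g z ≠ 0) (hg'0 : ∀ z ∈ U, deriv g z ≠ 0)
    (hode : ∀ z ∈ U, g z * deriv (deriv g) z = (3 / 2) * (deriv g z) ^ 2) :
    ∃ (A h : ℂ), A ≠ 0 ∧ ∀ z ∈ U, g z * (z - h) ^ 2 = A := by
  obtain ⟨z0, hz0⟩ := hUc.nonempty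
  have hUp := hUc.isPreconnected
  have hga : AnalyticOnNhd ℂ g U := hg.analyticOnNhd hUo
  have hg'a : AnalyticOnNhd ℂ (deriv g) U := hga.deriv
  have hdg : ∀ z ∈ U, DifferentiableAt ℂ g z := fun z hz => (hga z hz).differentiableAt
  have hdg' : ∀ z ∈ U, DifferentiableAt ℂ (deriv g) z :=
    fun z hz => (hg'a z hz).differentiableAt
  set ψ : ℂ → ℂ := fun z => g z / deriv g z + z / 2 with hψ
  have hψdiff : ∀ z ∈ U, DifferentiableAt ℂ ψ z := by
    intro z hz
    exact (((hdg z hz).div (hdg' z hz) (hg'0 z hz)).add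
      ((differentiableAt_id.div_const 2)))
  have hψ' : ∀ z ∈ U, deriv ψ z = 0 := by
    intro z hz
    have h1 : deriv ψ z = deriv (fun w => g w / deriv g w) z + deriv (fun w : ℂ => w / 2) z :=
      deriv_add ((hdg z hz).div (hdg' z hz) (hg'0 z hz)) (differentiableAt_id.div_const 2)
    have h2 : deriv (fun w => g w / deriv g w) z =
        (deriv g z * deriv g z - g z * deriv (deriv g) z) / (deriv g z) ^ 2 :=
      deriv_div (hdg z hz) (hdg' z hz) (hg'0 z hz)
    have h3 : deriv (fun w : ℂ => w / 2) z = 1 / 2 := by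
      simp [deriv_div_const]
    rw [h1, h2, h3, hode z hz]
    have := hg'0 z hz
    field_simp
    ring
  have hconst := const_of_deriv_zero_aux hUo hUp
    (fun z hz => (hψdiff z hz).differentiableWithinAt) hψ' hz0
  set h : ℂ := 2 * ψ z0 with hh
  have key : ∀ z ∈ U, g z = deriv g z * (h - z) / 2 := by
    intro z hz
    have hc := hconst z hz
    simp only [hψ] at hc
    have h4 : g z / deriv g z = (h - z) / 2 := by
      rw [hh]; linear_combination hc
    rw [div_eq_div_iff (hg'0 z hz) two_ne_zero] at h4
    linear_combination h4 / 2
  have hne : ∀ z ∈ U, z - h ≠ 0 := by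
    intro z hz hzh
    have hz' : z = h := sub_eq_zero.mp hzh
    apply hg0 z hz
    rw [key z hz, hz']
    ring
  set G : ℂ → ℂ := fun z => g z * (z - h) ^ 2 with hG
  have hGdiff : ∀ z ∈ U, DifferentiableAt ℂ G z := by
    intro z hz
    exact (hdg z hz).mul (((differentiableAt_id.sub_const h).pow 2))
  have hG' : ∀ z ∈ U, deriv G z = 0 := by
    intro z hz
    have hd2 : HasDerivAt (fun w : ℂ => (w - h) ^ 2) (2 * (z - h)) z := by
      simpa using (((hasDerivAt_id z).sub_const h).fun_pow 2)
    have hGd : HasDerivAt G (deriv g z * (z - h) ^ 2 + g z * (2 * (z - h))) z :=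
      (hdg z hz).hasDerivAt.mul hd2
    rw [hGd.deriv, key z hz]
    ring
  have hGconst := const_of_deriv_zero_aux hUo hUp
    (fun z hz => (hGdiff z hz).differentiableWithinAt) hG' hz0
  refine ⟨G z0, h, ?_, fun z hz => hGconst z hz⟩
  exact mul_ne_zero (hg0 z0 hz0) (pow_ne_zero 2 (hne z0 hz0))
end

section
/- Let U ⊆ ℂ be a nonempty open connected set, let c ∈ ℂ with c ≠ 0, and let g : ℂ → ℂ be holomorphic on U with g(z) ≠ 0 for all z ∈ U. If (g'(z))² = c · (g(z))³ for all z ∈ U, then there exists h ∈ ℂ such that c · g(z) · (z − h)² = 4 for all z ∈ U. -/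
open Complex Set Metric

/-- Solutions of `g'² = c g³` with `c ≠ 0` on a nonempty open connected set,
with `g` nonvanishing, satisfy `c g(z) (z − h)² = 4`. -/
theorem ode_const_Id {U : Set ℂ} (hUo : IsOpen U) (hUc : IsConnected U)
    (c : ℂ) (hc : c ≠ 0)
    (g : ℂ → ℂ) (hg : DifferentiableOn ℂ g U)
    (hg0 : ∀ z ∈ U, g z ≠ 0)
    (hode : ∀ z ∈ U, (deriv g z) ^ 2 = c * (g z) ^ 3) :
    ∃ h : ℂ, ∀ z ∈ U, c * g z * (z - h) ^ 2 = 4 := by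
  have hga : AnalyticOnNhd ℂ g U := hg.analyticOnNhd hUo
  have hg'a : AnalyticOnNhd ℂ (deriv g) U := hga.deriv
  have hgd : ∀ z ∈ U, DifferentiableAt ℂ g z := fun z hz => (hga z hz).differentiableAt
  have hg'd : ∀ z ∈ U, DifferentiableAt ℂ (deriv g) z := fun z hz => (hg'a z hz).differentiableAt
  -- g' never vanishes
  have hg'0 : ∀ z ∈ U, deriv g z ≠ 0 := by
    intro z hz h0
    have := hode z hz
    rw [h0] at this
    exact (mul_ne_zero hc (pow_ne_zero 3 (hg0 z hz))) (by linear_combination -this)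
  -- second derivative formula: g'' = (3/2) c g²
  have hgsec : ∀ z ∈ U, deriv (deriv g) z = 3 / 2 * c * (g z) ^ 2 := by
    intro z hz
    have h1 : HasDerivAt (fun w => (deriv g w) ^ 2)
        (2 * (deriv g z) ^ 1 * deriv (deriv g) z) z := ((hg'd z hz).hasDerivAt).pow 2
    have h2 : HasDerivAt (fun w => c * (g w) ^ 3)
        (c * (3 * (g z) ^ 2 * deriv g z)) z := (((hgd z hz).hasDerivAt).pow 3).const_mul c
    have heq : (fun w => (deriv g w) ^ 2) =ᶠ[nhds z] fun w => c * (g w) ^ 3 := by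
      filter_upwards [hUo.mem_nhds hz] with w hw
      exact hode w hw
    have h1' : HasDerivAt (fun w => c * (g w) ^ 3)
        (2 * (deriv g z) ^ 1 * deriv (deriv g) z) z := h1.congr_of_eventuallyEq heq.symm
    have huniq := h1'.unique h2
    have hode' := hode z hz
    field_simp
    have hgne := hg'0 z hz
    have : deriv (deriv g) z * deriv g z * 2 = 3 * c * (g z) ^ 2 * deriv g z := by
      linear_combination huniq
    have := mul_right_cancel₀ hgne (by linear_combination this :
      (deriv (deriv g) z * 2) * deriv g z = (3 * c * (g z) ^ 2) * deriv g z)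
    linear_combination this
  -- the function F = g'/g² + (c/2) z is analytic with zero derivative on U
  set F : ℂ → ℂ := fun z => deriv g z / (g z) ^ 2 + c / 2 * z with hF
  have hFd : ∀ z ∈ U, HasDerivAt F 0 z := by
    intro z hz
    have hd : HasDerivAt (fun w => deriv g w / (g w) ^ 2)
        ((deriv (deriv g) z * (g z) ^ 2 - deriv g z * (2 * (g z) ^ 1 * deriv g z)) / ((g z) ^ 2) ^ 2)
        z := ((hg'd z hz).hasDerivAt).div (((hgd z hz).hasDerivAt).pow 2)
          (pow_ne_zero 2 (hg0 z hz))
    have hlin : HasDerivAt (fun w : ℂ => c / 2 * w) (c / 2) z := by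
      simpa using (hasDerivAt_id z).const_mul (c / 2)
    have := hd.add hlin
    refine this.congr_deriv (Eq.symm ?_)
    rw [hgsec z hz]
    have h0 := hode z hz
    have hgz := hg0 z hz
    field_simp
    ring_nf
    linear_combination (4 : ℂ) * h0
  have hFa : AnalyticOnNhd ℂ F U := by
    apply AnalyticOnNhd.add
    · exact AnalyticOnNhd.div hg'a (hga.pow 2) (fun z hz => pow_ne_zero 2 (hg0 z hz))
    · exact fun z hz => analyticAt_const.mul analyticAt_id
  obtain ⟨z₀, hz₀⟩ := hUc.nonempty
  -- F is locally constant near z₀ hence constant on U by analytic continuation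
  obtain ⟨r, hr, hball⟩ := Metric.isOpen_iff.mp hUo z₀ hz₀
  have hconst : ∀ z ∈ ball z₀ r, F z = F z₀ := by
    intro z hz
    have hconv : Convex ℝ (ball z₀ r) := convex_ball z₀ r
    have hFdiff : DifferentiableOn ℂ F (ball z₀ r) :=
      fun w hw => ((hFd w (hball hw)).differentiableAt).differentiableWithinAt
    exact hconv.is_const_of_fderivWithin_eq_zero hFdiff
      (fun w hw => by
        rw [fderivWithin_eq_fderiv ((isOpen_ball).uniqueDiffOn w hw)
          ((hFd w (hball hw)).differentiableAt),
          ((hFd w (hball hw)).hasFDerivAt).fderiv]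
        ext
        simp)
      hz (mem_ball_self hr)
  have hFconst : EqOn F (fun _ => F z₀) U := by
    apply hFa.eqOn_of_preconnected_of_eventuallyEq (analyticOnNhd_const) hUc.isPreconnected hz₀
    filter_upwards [ball_mem_nhds z₀ hr] with w hw
    exact hconst w hw
  -- finish: set a = F z₀, h = 2a/c
  obtain ⟨a, hA⟩ : ∃ a, ∀ z ∈ U, F z = a := ⟨F z₀, fun z hz => hFconst hz⟩
  refine ⟨2 * a / c, fun z hz => ?_⟩
  have hFz : deriv g z / (g z) ^ 2 + c / 2 * z = a := hA z hz
  have hgz := hg0 z hz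
  have h1 : deriv g z = (a - c / 2 * z) * (g z) ^ 2 := by
    field_simp at hFz
    linear_combination (1/2 : ℂ) * hFz
  have h2 : c * (g z) ^ 3 = (a - c / 2 * z) ^ 2 * (g z) ^ 4 := by
    rw [← hode z hz, h1]; ring
  have h3 : c = (a - c / 2 * z) ^ 2 * g z := by
    have := mul_right_cancel₀ (pow_ne_zero 3 hgz)
      (by linear_combination h2 : c * (g z) ^ 3 = ((a - c / 2 * z) ^ 2 * g z) * (g z) ^ 3)
    exact this
  have hz2 : c * (z - 2 * a / c) = c * z - 2 * a := by field_simp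
  have h4 : c ^ 2 * (c * g z * (z - 2 * a / c) ^ 2) = c ^ 2 * 4 := by
    calc c ^ 2 * (c * g z * (z - 2 * a / c) ^ 2)
        = c * g z * (c * (z - 2 * a / c)) ^ 2 := by ring
      _ = c * g z * (c * z - 2 * a) ^ 2 := by rw [hz2]
      _ = c ^ 2 * 4 := by linear_combination (-4 * c) * h3
  exact mul_left_cancel₀ (pow_ne_zero 2 hc) h4
end

section
/- Let U ⊆ ℂ be a nonempty open connected set and let f : ℂ → ℂ be holomorphic on U with f''(z) ≠ 0 for all z ∈ U. If f'''(z) · f'(z) = (f''(z))² for all z ∈ U, then there exist constants λ ∈ ℂ with λ ≠ 0, c₁ ∈ ℂ with c₁ ≠ 0, and c₀ ∈ ℂ such that f(z) = c₁ · exp(λ z) + c₀ for all z ∈ U. -/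
lemma const_of_deriv_zero {U : Set ℂ} (hUo : IsOpen U) (hUc : IsPreconnected U)
    {g : ℂ → ℂ} (hg : ∀ z ∈ U, HasDerivAt g 0 z) {x y : ℂ} (hx : x ∈ U) (hy : y ∈ U) :
    g x = g y := by
  haveI : PreconnectedSpace U := Subtype.preconnectedSpace hUc
  have hloc : IsLocallyConstant (U.restrict g) := by
    rw [IsLocallyConstant.iff_exists_open]
    rintro ⟨z, hz⟩
    obtain ⟨r, hr, hball⟩ := Metric.isOpen_iff.1 hUo z hz
    refine ⟨Subtype.val ⁻¹' Metric.ball z r, (Metric.isOpen_ball).preimage continuous_subtype_val,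
      Set.mem_preimage.2 (Metric.mem_ball_self hr), ?_⟩
    rintro ⟨w, hw⟩ hwball
    have hdiff : DifferentiableOn ℂ g (Metric.ball z r) := fun u hu =>
      ((hg u (hball hu)).differentiableAt).differentiableWithinAt
    have hfd : ∀ u ∈ Metric.ball z r, fderivWithin ℂ g (Metric.ball z r) u = 0 := by
      intro u hu
      rw [fderivWithin_of_isOpen Metric.isOpen_ball hu]
      have := (hg u (hball hu)).hasFDerivAt.fderiv
      rw [this]
      exact ContinuousLinearMap.ext fun v => by simp
    exact (convex_ball z r).is_const_of_fderivWithin_eq_zero hdiff hfd hwball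
      (Metric.mem_ball_self hr)
  exact hloc.apply_eq_of_preconnectedSpace ⟨x, hx⟩ ⟨y, hy⟩

/-- Integrating `f''' f' = f''²` on a nonempty open connected set with `f''`
nonvanishing yields the exponential formfactor `f(z) = c₁ exp(λ z) + c₀`. -/
theorem ode_G3c {U : Set ℂ} (hUo : IsOpen U) (hUc : IsConnected U)
    (f : ℂ → ℂ) (hf : DifferentiableOn ℂ f U)
    (hf''0 : ∀ z ∈ U, deriv (deriv f) z ≠ 0)
    (hode : ∀ z ∈ U,
      deriv (deriv (deriv f)) z * deriv f z = (deriv (deriv f) z) ^ 2) :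
    ∃ (lam c₁ c₀ : ℂ), lam ≠ 0 ∧ c₁ ≠ 0 ∧
      ∀ z ∈ U, f z = c₁ * Complex.exp (lam * z) + c₀ := by
  obtain ⟨z₀, hz₀⟩ := hUc.nonempty
  have hpc : IsPreconnected U := hUc.isPreconnected
  have hAn : AnalyticOnNhd ℂ f U := hf.analyticOnNhd hUo
  have h1 : AnalyticOnNhd ℂ (deriv f) U := hAn.deriv
  have h2 : AnalyticOnNhd ℂ (deriv (deriv f)) U := h1.deriv
  have hD1 : ∀ z ∈ U, HasDerivAt f (deriv f z) z := fun z hz =>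
    (hAn z hz).differentiableAt.hasDerivAt
  have hD2 : ∀ z ∈ U, HasDerivAt (deriv f) (deriv (deriv f) z) z := fun z hz =>
    (h1 z hz).differentiableAt.hasDerivAt
  have hD3 : ∀ z ∈ U, HasDerivAt (deriv (deriv f)) (deriv (deriv (deriv f)) z) z := fun z hz =>
    (h2 z hz).differentiableAt.hasDerivAt
  have hf'0 : ∀ z ∈ U, deriv f z ≠ 0 := by
    intro z hz h0
    apply hf''0 z hz
    have := hode z hz
    rw [h0, mul_zero] at this
    exact pow_eq_zero_iff (n := 2) (by norm_num) |>.1 this.symm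
  -- g = f''/f' has zero derivative
  set g : ℂ → ℂ := fun z => deriv (deriv f) z / deriv f z with hgdef
  have hg : ∀ z ∈ U, HasDerivAt g 0 z := by
    intro z hz
    have hdiv := (hD3 z hz).div (hD2 z hz) (hf'0 z hz)
    have e : (deriv (deriv (deriv f)) z * deriv f z -
        deriv (deriv f) z * deriv (deriv f) z) / (deriv f z) ^ 2 = 0 := by
      rw [hode z hz, ← sq, sub_self, zero_div]
    rwa [e] at hdiv
  set lam : ℂ := g z₀ with hlamdef
  have hlam0 : lam ≠ 0 := div_ne_zero (hf''0 z₀ hz₀) (hf'0 z₀ hz₀)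
  have hlam : ∀ z ∈ U, deriv (deriv f) z = lam * deriv f z := by
    intro z hz
    have h' : deriv (deriv f) z / deriv f z = lam := const_of_deriv_zero hUo hpc hg hz hz₀
    exact (div_eq_iff (hf'0 z hz)).1 h'
  -- h = f' * exp(-(lam z)) has zero derivative
  set h : ℂ → ℂ := fun z => deriv f z * Complex.exp (-(lam * z)) with hhdef
  have hexp : ∀ z : ℂ, HasDerivAt (fun w => Complex.exp (-(lam * w)))
      (Complex.exp (-(lam * z)) * (-lam)) z := by
    intro z
    have : HasDerivAt (fun w : ℂ => -(lam * w)) (-lam) z := by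
      simpa [Pi.neg_def] using ((hasDerivAt_id z).const_mul lam).neg
    exact this.cexp
  have hh : ∀ z ∈ U, HasDerivAt h 0 z := by
    intro z hz
    have := (hD2 z hz).mul (hexp z)
    have e : deriv (deriv f) z * Complex.exp (-(lam * z)) +
        deriv f z * (Complex.exp (-(lam * z)) * -lam) = 0 := by
      rw [hlam z hz]; ring
    rwa [e] at this
  set c : ℂ := h z₀ with hcdef
  have hc0 : c ≠ 0 := mul_ne_zero (hf'0 z₀ hz₀) (Complex.exp_ne_zero _)
  have hf'eq : ∀ z ∈ U, deriv f z = c * Complex.exp (lam * z) := by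
    intro z hz
    have := const_of_deriv_zero hUo hpc hh hz hz₀
    rw [hhdef] at this
    have h2' : deriv f z * Complex.exp (-(lam * z)) = c := this
    have : deriv f z * Complex.exp (-(lam * z)) * Complex.exp (lam * z)
        = c * Complex.exp (lam * z) := by rw [h2']
    rwa [mul_assoc, ← Complex.exp_add, neg_add_cancel, Complex.exp_zero, mul_one] at this
  -- k = f - (c/lam) exp(lam z) has zero derivative
  set k : ℂ → ℂ := fun z => f z - c / lam * Complex.exp (lam * z) with hkdef
  have hexpp : ∀ z : ℂ, HasDerivAt (fun w => c / lam * Complex.exp (lam * w))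
      (c / lam * (Complex.exp (lam * z) * lam)) z := by
    intro z
    have : HasDerivAt (fun w : ℂ => lam * w) lam z := by
      simpa using (hasDerivAt_id z).const_mul lam
    exact this.cexp.const_mul _
  have hk : ∀ z ∈ U, HasDerivAt k 0 z := by
    intro z hz
    have := (hD1 z hz).sub (hexpp z)
    have e : deriv f z - c / lam * (Complex.exp (lam * z) * lam) = 0 := by
      rw [hf'eq z hz, mul_comm (Complex.exp (lam * z)) lam, ← mul_assoc,
        div_mul_cancel₀ c hlam0, sub_self]
    rwa [e] at this
  refine ⟨lam, c / lam, k z₀, hlam0, div_ne_zero hc0 hlam0, ?_⟩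
  intro z hz
  have := const_of_deriv_zero hUo hpc hk hz hz₀
  rw [hkdef] at this
  have h3 : f z - c / lam * Complex.exp (lam * z) = k z₀ := this
  linear_combination h3
end

section
/- Let F_Re, F_Im : ℝ → ℝ and let B : ℝ → ℂ be twice differentiable. Suppose that for all u ∈ ℝ: Re(B''(u)) · exp(−Re B(u)) = F_Re(Re(B'(u)) · exp(−Re B(u)/2)) and (Im B'(u))² · exp(−Re B(u)) = F_Im(Re(B'(u)) · exp(−Re B(u)/2)). Then for every a > 0 and u₀, β ∈ ℝ, the function B̃(u) := B(a(u − u₀)) + 2·log a + 2iβ satisfies the same two equations: Re(B̃''(u)) · exp(−Re B̃(u)) = F_Re(Re(B̃'(u)) · exp(−Re B̃(u)/2)) and (Im B̃'(u))² · exp(−Re B̃(u)) = F_Im(Re(B̃'(u)) · exp(−Re B̃(u)/2)) for all u ∈ ℝ. -/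
open Complex in
private lemma affine_hasDerivAt (a u₀ u : ℝ) :
    HasDerivAt (fun u : ℝ => a * (u - u₀)) a u := by
  simpa using (((hasDerivAt_id u).sub_const u₀).const_mul a)

open Complex in
private lemma deriv_comp_affine (G : ℝ → ℂ) (hG : Differentiable ℝ G) (a u₀ : ℝ) :
    deriv (fun u : ℝ => G (a * (u - u₀))) = fun u => a • deriv G (a * (u - u₀)) := by
  funext u
  exact (((hG (a * (u - u₀))).hasDerivAt.scomp u (affine_hasDerivAt a u₀ u))).deriv

open Complex in
/-- Invariance of the `G₅` signature equation
`(Re B̈ e^{−Re B}, (Im Ḃ)² e^{−Re B}) = F(Re Ḃ e^{−Re B/2})` under the residual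
gauge transformations `B(u) ↦ B(a(u−u₀)) + 2 log a + 2iβ`. -/
theorem G5_signature_gauge_invariance (F_Re F_Im : ℝ → ℝ) (B : ℝ → ℂ)
    (hB : Differentiable ℝ B) (hB' : Differentiable ℝ (deriv B))
    (h1 : ∀ u : ℝ, (deriv (deriv B) u).re * Real.exp (-(B u).re)
      = F_Re ((deriv B u).re * Real.exp (-(B u).re / 2)))
    (h2 : ∀ u : ℝ, ((deriv B u).im) ^ 2 * Real.exp (-(B u).re)
      = F_Im ((deriv B u).re * Real.exp (-(B u).re / 2)))
    (a : ℝ) (ha : 0 < a) (u₀ β : ℝ) :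
    ∀ u : ℝ,
      letI Bt : ℝ → ℂ := fun u => B (a * (u - u₀))
        + (2 * Real.log a : ℝ) + 2 * Complex.I * (β : ℂ)
      (deriv (deriv Bt) u).re * Real.exp (-(Bt u).re)
          = F_Re ((deriv Bt u).re * Real.exp (-(Bt u).re / 2))
        ∧ ((deriv Bt u).im) ^ 2 * Real.exp (-(Bt u).re)
          = F_Im ((deriv Bt u).re * Real.exp (-(Bt u).re / 2)) := by
  intro u
  set Bt : ℝ → ℂ := fun u => B (a * (u - u₀))
      + (2 * Real.log a : ℝ) + 2 * Complex.I * (β : ℂ) with hBt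
  have ha0 : a ≠ 0 := ne_of_gt ha
  set x : ℝ := a * (u - u₀) with hx
  -- first derivative
  have hd1 : deriv Bt = fun u => a • deriv B (a * (u - u₀)) := by
    funext v
    have h0 : HasDerivAt (fun u : ℝ => B (a * (u - u₀)))
        (a • deriv B (a * (v - u₀))) v :=
      ((hB (a * (v - u₀))).hasDerivAt.scomp v (affine_hasDerivAt a u₀ v))
    have : HasDerivAt Bt (a • deriv B (a * (v - u₀))) v := by
      simpa [hBt] using (h0.add_const ((2 * Real.log a : ℝ) : ℂ)).add_const (2 * Complex.I * (β : ℂ))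
    exact this.deriv
  -- second derivative
  have hd2 : deriv (deriv Bt) u = a • (a • deriv (deriv B) x) := by
    rw [hd1]
    have h0 : HasDerivAt (fun v : ℝ => deriv B (a * (v - u₀)))
        (a • deriv (deriv B) x) u := by
      rw [hx]; exact ((hB' (a * (u - u₀))).hasDerivAt.scomp u (affine_hasDerivAt a u₀ u))
    have : HasDerivAt (fun v : ℝ => a • deriv B (a * (v - u₀)))
        (a • (a • deriv (deriv B) x)) u := h0.const_smul a
    exact this.deriv
  have hre : (Bt u).re = (B x).re + 2 * Real.log a := by
    simp [hBt, hx]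
  have hexp2 : Real.exp (-(2 * Real.log a)) = (a ^ 2)⁻¹ := by
    rw [show (2 : ℝ) * Real.log a = Real.log (a ^ 2) by
      rw [Real.log_pow]; push_cast; ring, Real.exp_neg,
      Real.exp_log (pow_pos ha 2)]
  have hexp1 : Real.exp (-Real.log a) = a⁻¹ := by
    rw [Real.exp_neg, Real.exp_log ha]
  have hE : Real.exp (-(Bt u).re) = Real.exp (-(B x).re) / a ^ 2 := by
    rw [hre, neg_add, Real.exp_add, hexp2, div_eq_mul_inv]
  have hE2 : Real.exp (-(Bt u).re / 2) = Real.exp (-(B x).re / 2) / a := by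
    rw [hre, neg_add, add_div, Real.exp_add,
      show -(2 * Real.log a) / 2 = -Real.log a by ring, hexp1]
    ring
  have hD1re : (deriv Bt u).re = a * (deriv B x).re := by
    rw [hd1]; simp [hx]
  have hD1im : (deriv Bt u).im = a * (deriv B x).im := by
    rw [hd1]; simp [hx]
  have hD2re : (deriv (deriv Bt) u).re = a ^ 2 * (deriv (deriv B) x).re := by
    rw [hd2]; simp [hx]; ring
  have harg : (deriv Bt u).re * Real.exp (-(Bt u).re / 2)
      = (deriv B x).re * Real.exp (-(B x).re / 2) := by
    rw [hD1re, hE2]; field_simp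
  constructor
  · rw [harg, hD2re, hE, ← h1 x]; field_simp
  · rw [harg, hD1im, hE, ← h2 x]; field_simp
end
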